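/- Let A ∈ (ℝ ∪ {−∞})^{n×n} have spectral radius λ > −∞, let B ∈ (ℝ ∪ {−∞})^{n×n} satisfy Tr(B) ≤ 𝟙, and let g ∈ (ℝ ∪ {−∞})ⁿ. Set θ = λ ⊕ ⊕_{k=1}^{n−1} ⊕ tr^{1/k}(A B^{i_1} A B^{i_2} ⋯ A B^{i_k}), where the inner ⊕ ranges over all nonnegative integers i_1, …, i_k with 1 ≤ i_1 + ⋯ + i_k ≤ n − k. Then the minimum of x⁻ A x over all regular vectors x ∈ ℝⁿ satisfying B x ⊕ g ≤ x equals θ, and a regular vector x satisfying this constraint attains this minimum if and only if x = (θ⁻¹ A ⊕ B)* u for some vector u with u ≥ g, where θ⁻¹ = −θ. -/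

import Mathlib

open Finset

noncomputable section

namespace MaxPlus

/-- Max-plus multiplicative inverse: `-a` for real `a`, `⊥` for `⊥`. -/
def tinv (a : WithBot ℝ) : WithBot ℝ := WithBot.map (fun r => -r) a

/-- Max-plus rational power `a^(1/k) = a / k`. -/
def trt (a : WithBot ℝ) (k : ℕ) : WithBot ℝ := WithBot.map (fun r => r / (k : ℝ)) a

/-- A vector is regular if it has no `⊥` (= -∞) entries. -/
def Reg {n : ℕ} (x : Fin n → WithBot ℝ) : Prop := ∀ i, x i ≠ ⊥

/-- `cdot q x = q⁻ x`, the max-plus product of the conjugate row vector `q⁻` with `x`. -/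
def cdot {n : ℕ} (q x : Fin n → WithBot ℝ) : WithBot ℝ :=
  Finset.univ.sup fun i => tinv (q i) + x i

/-- Max-plus matrix-vector product. -/
def mulVec {m n : ℕ} (A : Matrix (Fin m) (Fin n) (WithBot ℝ)) (x : Fin n → WithBot ℝ) :
    Fin m → WithBot ℝ := fun i => Finset.univ.sup fun j => A i j + x j

/-- Max-plus matrix product. -/
def tmul {l m n : ℕ} (A : Matrix (Fin l) (Fin m) (WithBot ℝ))
    (B : Matrix (Fin m) (Fin n) (WithBot ℝ)) : Matrix (Fin l) (Fin n) (WithBot ℝ) :=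
  fun i j => Finset.univ.sup fun k => A i k + B k j

/-- Multiplicative conjugate transpose of a matrix. -/
def conjM {m n : ℕ} (A : Matrix (Fin m) (Fin n) (WithBot ℝ)) :
    Matrix (Fin n) (Fin m) (WithBot ℝ) := fun i j => tinv (A j i)

/-- Max-plus identity matrix. -/
def tId {n : ℕ} : Matrix (Fin n) (Fin n) (WithBot ℝ) := fun i j => if i = j then 0 else ⊥

/-- Max-plus matrix power. -/
def tpow {n : ℕ} (A : Matrix (Fin n) (Fin n) (WithBot ℝ)) : ℕ → Matrix (Fin n) (Fin n) (WithBot ℝ)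
  | 0 => tId
  | k + 1 => tmul A (tpow A k)

/-- Max-plus trace. -/
def ttr {n : ℕ} (A : Matrix (Fin n) (Fin n) (WithBot ℝ)) : WithBot ℝ :=
  Finset.univ.sup fun i => A i i

/-- `Tr(A) = tr A ⊕ tr A² ⊕ ⋯ ⊕ tr Aⁿ`. -/
def TrOp {n : ℕ} (A : Matrix (Fin n) (Fin n) (WithBot ℝ)) : WithBot ℝ :=
  (Finset.Icc 1 n).sup fun m => ttr (tpow A m)

/-- Kleene star `A* = I ⊕ A ⊕ ⋯ ⊕ A^(n-1)`. -/
def kstar {n : ℕ} (A : Matrix (Fin n) (Fin n) (WithBot ℝ)) : Matrix (Fin n) (Fin n) (WithBot ℝ) :=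
  fun i j => (Finset.range n).sup fun k => tpow A k i j

/-- Max-plus spectral radius `λ = ⊕_{m=1}^n (tr A^m)^(1/m)`. -/
def specRad {n : ℕ} (A : Matrix (Fin n) (Fin n) (WithBot ℝ)) : WithBot ℝ :=
  (Finset.Icc 1 n).sup fun m => trt (ttr (tpow A m)) m

/-- `prodAB A B [i₁, …, i_k] = A B^{i₁} A B^{i₂} ⋯ A B^{i_k}`. -/
def prodAB {n : ℕ} (A B : Matrix (Fin n) (Fin n) (WithBot ℝ)) :
    List ℕ → Matrix (Fin n) (Fin n) (WithBot ℝ)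
  | [] => tId
  | i :: t => tmul (tmul A (tpow B i)) (prodAB A B t)

/-- The all-ones (all-`𝟙 = 0`) vector. -/
def onesV (n : ℕ) : Fin n → WithBot ℝ := fun _ => 0

end MaxPlus

open MaxPlus

/-!
For a feasible regular `x` put `s = x⁻ A x`. Then `A x ≤ s x` and `B x ≤ x`, so every product
`A B^{i₁} ⋯ A B^{i_k}` maps `x` below `s^k x`; its trace is therefore at most `s^k`, and `θ ≤ s`.

Conversely, `θ` is exactly large enough for `Tr(θ⁻¹ A ⊕ B) ≤ 𝟙`: each term of the expansion of
`(θ⁻¹ A ⊕ B)^m`, rotated under the trace, is either `B^m` or `θ^{-k} A B^{i₁} ⋯ A B^{i_k}` with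
`k + i₁ + ⋯ + i_k = m ≤ n`. Then the Kleene star of `C = θ⁻¹ A ⊕ B` dominates every power of `C`
(a path of length `≥ n` contains a cycle of nonpositive weight), so the solutions of `C x ⊕ g ≤ x`
are exactly the vectors `C* u` with `u ≥ g`. For a feasible regular `x`, `x⁻ A x ≤ θ` is the
inequality `θ⁻¹ A x ≤ x`, i.e. `C x ⊕ g ≤ x`; `u = g ⊕ 𝟙` gives a regular optimal solution.
-/

lemma exists_lt_le_apply_eq_apply {n : ℕ} (p : ℕ → Fin n) : ∃ a b, a < b ∧ b ≤ n ∧ p a = p b := by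
  obtain ⟨a, b, hab, h⟩ :=
    Fintype.exists_ne_map_eq_of_card_lt (fun t : Fin (n + 1) => p t) (by simp)
  rcases lt_or_gt_of_ne hab with hlt | hlt
  · exact ⟨a, b, hlt, Nat.lt_succ_iff.1 b.2, h⟩
  · exact ⟨b, a, hlt, Nat.lt_succ_iff.1 a.2, h.symm⟩

namespace MaxPlus

lemma add_finsetSup {ι : Type*} (s : Finset ι) (f : ι → WithBot ℝ) (a : WithBot ℝ) :
    a + s.sup f = s.sup fun i => a + f i :=
  Finset.apply_sup_eq_sup_comp (a + ·) (add_max a) (WithBot.add_bot a)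

lemma finsetSup_add {ι : Type*} (s : Finset ι) (f : ι → WithBot ℝ) (a : WithBot ℝ) :
    s.sup f + a = s.sup fun i => f i + a := by
  simp only [add_comm _ a, add_finsetSup]

lemma tinv_add_le_iff {a b c : WithBot ℝ} (ha : a ≠ ⊥) : tinv a + b ≤ c ↔ b ≤ c + a := by
  obtain ⟨r, rfl⟩ := WithBot.ne_bot_iff_exists.1 ha
  rw [← WithBot.add_le_add_iff_right (WithBot.coe_ne_bot (a := r)), add_right_comm]
  simp [tinv, ← WithBot.coe_add]

lemma trt_le_iff {a s : WithBot ℝ} {k : ℕ} (hk : 0 < k) : trt a k ≤ s ↔ a ≤ k • s := by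
  induction a using WithBot.recBotCoe with
  | bot => simp [trt]
  | coe r =>
    induction s using WithBot.recBotCoe with
    | bot =>
      obtain ⟨j, rfl⟩ := Nat.exists_eq_add_one_of_ne_zero hk.ne'
      simp [trt, succ_nsmul]
    | coe t =>
      rw [← WithBot.coe_nsmul, trt, WithBot.map_coe, WithBot.coe_le_coe, WithBot.coe_le_coe,
        div_le_iff₀ (by exact_mod_cast hk), nsmul_eq_mul, mul_comm]

lemma nsmul_tinv_add_nonpos {θ a : WithBot ℝ} (hθ : θ ≠ ⊥) {k : ℕ} (ha : a ≤ k • θ) :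
    k • tinv θ + a ≤ 0 := by
  obtain ⟨r, rfl⟩ := WithBot.ne_bot_iff_exists.1 hθ
  calc k • tinv (r : WithBot ℝ) + a = k • ((-r : ℝ) : WithBot ℝ) + a := rfl
    _ ≤ k • ((-r : ℝ) : WithBot ℝ) + k • (r : WithBot ℝ) := by gcongr
    _ = 0 := by rw [← nsmul_add, ← WithBot.coe_add, neg_add_cancel]; simp

section Algebra

variable {l m n o : ℕ}

lemma le_tmul (A : Matrix (Fin l) (Fin m) (WithBot ℝ)) (B : Matrix (Fin m) (Fin n) (WithBot ℝ))
    (i : Fin l) (k : Fin m) (j : Fin n) : A i k + B k j ≤ tmul A B i j :=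
  Finset.le_sup (f := fun k => A i k + B k j) (Finset.mem_univ k)

lemma le_mulVec (A : Matrix (Fin m) (Fin n) (WithBot ℝ)) (x : Fin n → WithBot ℝ)
    (i : Fin m) (j : Fin n) : A i j + x j ≤ mulVec A x i :=
  Finset.le_sup (f := fun j => A i j + x j) (Finset.mem_univ j)

lemma le_ttr (M : Matrix (Fin n) (Fin n) (WithBot ℝ)) (i : Fin n) : M i i ≤ ttr M :=
  Finset.le_sup (f := fun i => M i i) (Finset.mem_univ i)

lemma tmul_assoc (A : Matrix (Fin l) (Fin m) (WithBot ℝ)) (B : Matrix (Fin m) (Fin n) (WithBot ℝ))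
    (C : Matrix (Fin n) (Fin o) (WithBot ℝ)) : tmul (tmul A B) C = tmul A (tmul B C) := by
  funext i j
  simp only [tmul, finsetSup_add, add_finsetSup, add_assoc]
  exact Finset.sup_comm _ _ _

lemma mulVec_tmul (A : Matrix (Fin l) (Fin m) (WithBot ℝ)) (B : Matrix (Fin m) (Fin n) (WithBot ℝ))
    (x : Fin n → WithBot ℝ) : mulVec (tmul A B) x = mulVec A (mulVec B x) := by
  funext i
  simp only [mulVec, tmul, finsetSup_add, add_finsetSup, add_assoc]
  exact Finset.sup_comm _ _ _

lemma tId_tmul (A : Matrix (Fin m) (Fin n) (WithBot ℝ)) : tmul tId A = A := by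
  funext i j
  refine le_antisymm (Finset.sup_le fun k _ => ?_) (by simpa [tId] using le_tmul tId A i i j)
  by_cases h : i = k <;> simp [tId, h]

lemma tmul_tId (A : Matrix (Fin m) (Fin n) (WithBot ℝ)) : tmul A tId = A := by
  funext i j
  refine le_antisymm (Finset.sup_le fun k _ => ?_) (by simpa [tId] using le_tmul A tId i j j)
  by_cases h : k = j <;> simp [tId, h]

lemma mulVec_tId (x : Fin n → WithBot ℝ) : mulVec tId x = x := by
  funext i
  refine le_antisymm (Finset.sup_le fun j _ => ?_) (by simpa [tId] using le_mulVec tId x i i)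
  by_cases h : i = j <;> simp [tId, h]

lemma tpow_add (A : Matrix (Fin n) (Fin n) (WithBot ℝ)) (a b : ℕ) :
    tmul (tpow A a) (tpow A b) = tpow A (a + b) := by
  induction a with
  | zero => rw [zero_add, tpow, tId_tmul]
  | succ a ih => rw [tpow, tmul_assoc, ih, Nat.add_right_comm, tpow]

lemma mulVec_mono {A A' : Matrix (Fin m) (Fin n) (WithBot ℝ)} {x y : Fin n → WithBot ℝ}
    (hA : ∀ i j, A i j ≤ A' i j) (hx : ∀ j, x j ≤ y j) (i : Fin m) :
    mulVec A x i ≤ mulVec A' y i :=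
  Finset.sup_le fun j _ => (add_le_add (hA i j) (hx j)).trans (le_mulVec A' y i j)

lemma mulVec_sup_le_iff (A B : Matrix (Fin m) (Fin n) (WithBot ℝ)) (x : Fin n → WithBot ℝ)
    (i : Fin m) (y : WithBot ℝ) :
    mulVec (fun a b => A a b ⊔ B a b) x i ≤ y ↔ mulVec A x i ≤ y ∧ mulVec B x i ≤ y := by
  simp only [mulVec, Finset.sup_le_iff, max_add, max_le_iff, imp_and, forall_and]

lemma mulVec_const_add (A : Matrix (Fin m) (Fin n) (WithBot ℝ)) (c : WithBot ℝ)
    (x : Fin n → WithBot ℝ) (i : Fin m) : mulVec A (fun j => c + x j) i = c + mulVec A x i := by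
  simp only [mulVec, add_finsetSup, add_left_comm]

lemma const_add_mulVec (A : Matrix (Fin m) (Fin n) (WithBot ℝ)) (c : WithBot ℝ)
    (x : Fin n → WithBot ℝ) (i : Fin m) :
    mulVec (fun a b => c + A a b) x i = c + mulVec A x i := by
  simp only [mulVec, add_finsetSup, add_assoc]

lemma const_add_tmul (A : Matrix (Fin l) (Fin m) (WithBot ℝ))
    (B : Matrix (Fin m) (Fin n) (WithBot ℝ)) (c : WithBot ℝ) :
    tmul (fun a b => c + A a b) B = fun a b => c + tmul A B a b := by
  funext i j
  simp only [tmul, add_finsetSup, add_assoc]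

lemma tmul_const_add (A : Matrix (Fin l) (Fin m) (WithBot ℝ))
    (B : Matrix (Fin m) (Fin n) (WithBot ℝ)) (c : WithBot ℝ) :
    tmul A (fun a b => c + B a b) = fun a b => c + tmul A B a b := by
  funext i j
  simp only [tmul, add_finsetSup, add_left_comm]

lemma ttr_const_add (M : Matrix (Fin n) (Fin n) (WithBot ℝ)) (c : WithBot ℝ) :
    ttr (fun a b => c + M a b) = c + ttr M := by
  simp only [ttr, add_finsetSup]

lemma ttr_tmul_comm (M N : Matrix (Fin n) (Fin n) (WithBot ℝ)) :
    ttr (tmul M N) = ttr (tmul N M) := by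
  simp only [ttr, tmul, add_comm (M _ _)]
  exact Finset.sup_comm _ _ _

end Algebra

section SubEigen

variable {n : ℕ} {x : Fin n → WithBot ℝ}

lemma mulVec_tmul_le {M N : Matrix (Fin n) (Fin n) (WithBot ℝ)} {a b : WithBot ℝ}
    (hM : ∀ i, mulVec M x i ≤ a + x i) (hN : ∀ i, mulVec N x i ≤ b + x i) (i : Fin n) :
    mulVec (tmul M N) x i ≤ a + b + x i :=
  calc mulVec (tmul M N) x i ≤ mulVec M (fun j => b + x j) i := by
        rw [mulVec_tmul]; exact mulVec_mono (fun _ _ => le_rfl) hN i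
    _ = b + mulVec M x i := mulVec_const_add M b x i
    _ ≤ a + b + x i := by rw [add_comm a, add_assoc]; gcongr; exact hM i

lemma mulVec_tpow_le {M : Matrix (Fin n) (Fin n) (WithBot ℝ)} {a : WithBot ℝ}
    (hM : ∀ i, mulVec M x i ≤ a + x i) (k : ℕ) (i : Fin n) :
    mulVec (tpow M k) x i ≤ k • a + x i := by
  induction k generalizing i with
  | zero => simp [tpow, mulVec_tId]
  | succ k ih => rw [succ_nsmul', tpow]; exact mulVec_tmul_le hM ih i

lemma mulVec_prodAB_le {A B : Matrix (Fin n) (Fin n) (WithBot ℝ)} {a : WithBot ℝ}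
    (hA : ∀ i, mulVec A x i ≤ a + x i) (hB : ∀ i, mulVec B x i ≤ x i) (l : List ℕ) (i : Fin n) :
    mulVec (prodAB A B l) x i ≤ l.length • a + x i := by
  induction l generalizing i with
  | nil => simp [prodAB, mulVec_tId]
  | cons e l ih =>
    have hBe : ∀ i, mulVec (tpow B e) x i ≤ 0 + x i := by
      simpa using mulVec_tpow_le (a := 0) (by simpa using hB) e
    rw [List.length_cons, succ_nsmul', prodAB]
    exact mulVec_tmul_le (by simpa using mulVec_tmul_le hA hBe) ih i

lemma diag_le_of_mulVec_le {M : Matrix (Fin n) (Fin n) (WithBot ℝ)} {c : WithBot ℝ}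
    (hx : Reg x) {i : Fin n} (h : mulVec M x i ≤ c + x i) : M i i ≤ c :=
  (WithBot.add_le_add_iff_right (hx i)).1 ((le_mulVec M x i i).trans h)

lemma ttr_le_of_mulVec_le {M : Matrix (Fin n) (Fin n) (WithBot ℝ)} {c : WithBot ℝ}
    (hx : Reg x) (h : ∀ i, mulVec M x i ≤ c + x i) : ttr M ≤ c :=
  Finset.sup_le fun i _ => diag_le_of_mulVec_le hx (h i)

lemma cdot_le_iff (hx : Reg x) (y : Fin n → WithBot ℝ) (c : WithBot ℝ) :
    cdot x y ≤ c ↔ ∀ i, y i ≤ c + x i := by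
  simp only [cdot, Finset.sup_le_iff, Finset.mem_univ, true_imp_iff, tinv_add_le_iff (hx _)]

end SubEigen

section Kleene

variable {n : ℕ} (C : Matrix (Fin n) (Fin n) (WithBot ℝ))

def pathWeight (p : ℕ → Fin n) (m : ℕ) : WithBot ℝ :=
  ∑ t ∈ Finset.range m, C (p t) (p (t + 1))

lemma pathWeight_add (p : ℕ → Fin n) (a d : ℕ) :
    pathWeight C p (a + d) = pathWeight C p a + pathWeight C (fun t => p (a + t)) d := by
  simp only [pathWeight, Finset.sum_range_add, add_assoc]

lemma pathWeight_congr {p q : ℕ → Fin n} {m : ℕ} (h : ∀ t ≤ m, p t = q t) :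
    pathWeight C p m = pathWeight C q m :=
  Finset.sum_congr rfl fun t ht => by
    have := Finset.mem_range.1 ht
    rw [h t (by omega), h (t + 1) (by omega)]

lemma pathWeight_succ (p : ℕ → Fin n) (m : ℕ) :
    pathWeight C p (m + 1) = C (p 0) (p 1) + pathWeight C (fun t => p (t + 1)) m := by
  rw [pathWeight, Finset.sum_range_succ', add_comm]
  rfl

lemma pathWeight_le_tpow (p : ℕ → Fin n) (m : ℕ) : pathWeight C p m ≤ tpow C m (p 0) (p m) := by
  induction m generalizing p with
  | zero => simp [pathWeight, tpow, tId]
  | succ m ih =>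
    rw [pathWeight_succ]
    exact (add_le_add_right (ih _) _).trans (le_tmul C (tpow C m) _ _ _)

lemma tpow_eq_bot_or_le_pathWeight (m : ℕ) (i j : Fin n) :
    tpow C m i j = ⊥ ∨ ∃ p : ℕ → Fin n, p 0 = i ∧ p m = j ∧ tpow C m i j ≤ pathWeight C p m := by
  induction m generalizing i with
  | zero =>
    by_cases h : i = j
    · exact .inr ⟨fun _ => i, rfl, h, by simp [pathWeight, tpow, tId, h]⟩
    · exact .inl (by simp [tpow, tId, h])
  | succ m ih =>
    obtain ⟨k, -, hk⟩ := Finset.exists_mem_eq_sup Finset.univ ⟨i, Finset.mem_univ i⟩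
      fun k => C i k + tpow C m k j
    change tmul C (tpow C m) i j = _ at hk
    rcases ih k with hbot | ⟨q, hq0, hqm, hq⟩
    · exact .inl (by rw [tpow, hk, hbot, WithBot.add_bot])
    · refine .inr ⟨fun t => if t = 0 then i else q (t - 1), rfl, by simpa using hqm, ?_⟩
      rw [tpow, hk, pathWeight_succ]
      simpa [hq0] using add_le_add_right hq _

lemma tpow_le_kstar_of_lt {k : ℕ} (hk : k < n) (i j : Fin n) : tpow C k i j ≤ kstar C i j :=
  Finset.le_sup (f := fun k => tpow C k i j) (Finset.mem_range.2 hk)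

lemma exists_pathWeight_ge_of_cycle (p : ℕ → Fin n) {a b m : ℕ} (hab : a < b) (hbm : b ≤ m)
    (hp : p a = p b) (hcyc : pathWeight C (fun t => p (a + t)) (b - a) ≤ 0) :
    ∃ r : ℕ → Fin n, r 0 = p 0 ∧ r (a + (m - b)) = p m ∧
      pathWeight C p m ≤ pathWeight C r (a + (m - b)) := by
  set r : ℕ → Fin n := fun t => if t < a then p t else p (t + (b - a)) with hr
  have hr_head : ∀ t ≤ a, r t = p t := by
    intro t ht
    rcases ht.lt_or_eq with ht | rfl
    · simp [hr, ht]
    · simp [hr, Nat.add_sub_cancel' hab.le, hp]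
  have hr_tail : (fun t => r (a + t)) = fun t => p (b + t) := by
    funext t
    simp only [hr, if_neg (Nat.not_lt.2 (Nat.le_add_right a t))]
    congr 1
    omega
  have hp_split : pathWeight C p m = pathWeight C p a +
      (pathWeight C (fun t => p (a + t)) (b - a) + pathWeight C (fun t => p (b + t)) (m - b)) := by
    conv_lhs => rw [show m = a + ((b - a) + (m - b)) by omega]
    rw [pathWeight_add, pathWeight_add]
    simp only [← add_assoc, Nat.add_sub_cancel' hab.le]
  refine ⟨r, hr_head 0 (Nat.zero_le a), ?_, ?_⟩
  · simp only [hr, if_neg (Nat.not_lt.2 (Nat.le_add_right a _))]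
    congr 1
    omega
  · rw [pathWeight_add, hr_tail, pathWeight_congr C hr_head, hp_split]
    gcongr
    exact (add_le_add_left hcyc _).trans_eq (zero_add _)

lemma pathWeight_le_kstar (hC : TrOp C ≤ 0) (m : ℕ) (p : ℕ → Fin n) :
    pathWeight C p m ≤ kstar C (p 0) (p m) := by
  induction m using Nat.strong_induction_on generalizing p with
  | h m ih =>
  by_cases hmn : m < n
  · exact (pathWeight_le_tpow C p m).trans (tpow_le_kstar_of_lt C hmn _ _)
  · obtain ⟨a, b, hab, hbn, hp⟩ := exists_lt_le_apply_eq_apply p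
    have hcyc : pathWeight C (fun t => p (a + t)) (b - a) ≤ 0 := by
      refine (pathWeight_le_tpow C _ _).trans ?_
      simp only [add_zero, Nat.add_sub_cancel' hab.le, ← hp]
      exact (le_ttr _ _).trans <| (Finset.le_sup (f := fun k => ttr (tpow C k))
        (Finset.mem_Icc.2 ⟨by omega, by omega⟩)).trans hC
    obtain ⟨r, hr0, hrm, hle⟩ :=
      exists_pathWeight_ge_of_cycle C p hab (m := m) (by omega) hp hcyc
    exact hle.trans (by simpa only [hr0, hrm] using ih (a + (m - b)) (by omega) r)

lemma tpow_le_kstar (hC : TrOp C ≤ 0) (m : ℕ) (i j : Fin n) : tpow C m i j ≤ kstar C i j := by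
  rcases tpow_eq_bot_or_le_pathWeight C m i j with h | ⟨p, rfl, rfl, h⟩
  · simp [h]
  · exact h.trans (pathWeight_le_kstar C hC m p)

lemma tmul_kstar_le (hC : TrOp C ≤ 0) (i j : Fin n) : tmul C (kstar C) i j ≤ kstar C i j :=
  Finset.sup_le fun k _ => by
    simp only [kstar, add_finsetSup]
    exact Finset.sup_le fun l _ =>
      (le_tmul C (tpow C l) i k j).trans (tpow_le_kstar C hC (l + 1) i j)

lemma le_mulVec_kstar (x : Fin n → WithBot ℝ) (i : Fin n) : x i ≤ mulVec (kstar C) x i := by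
  have h0 : (0 : WithBot ℝ) ≤ kstar C i i := by
    simpa [tpow, tId] using tpow_le_kstar_of_lt C i.pos i i
  calc x i = 0 + x i := (zero_add _).symm
    _ ≤ kstar C i i + x i := by gcongr
    _ ≤ mulVec (kstar C) x i := le_mulVec _ x i i

lemma mulVec_kstar_le {x : Fin n → WithBot ℝ} (h : ∀ i, mulVec C x i ≤ x i) (i : Fin n) :
    mulVec (kstar C) x i ≤ x i :=
  Finset.sup_le fun j _ => by
    simp only [kstar, finsetSup_add]
    exact Finset.sup_le fun k _ => (le_mulVec _ x i j).trans
      (by simpa using mulVec_tpow_le (a := 0) (by simpa using h) k i)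

theorem exists_eq_mulVec_kstar_iff (hC : TrOp C ≤ 0) (x g : Fin n → WithBot ℝ) :
    ((∀ i, mulVec C x i ≤ x i) ∧ ∀ i, g i ≤ x i) ↔
      ∃ u, x = mulVec (kstar C) u ∧ ∀ j, g j ≤ u j := by
  constructor
  · rintro ⟨hCx, hg⟩
    exact ⟨x, funext fun i => le_antisymm (le_mulVec_kstar C x i) (mulVec_kstar_le C hCx i), hg⟩
  · rintro ⟨u, rfl, hg⟩
    refine ⟨fun i => ?_, fun i => (hg i).trans (le_mulVec_kstar C u i)⟩
    rw [← mulVec_tmul]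
    exact mulVec_mono (tmul_kstar_le C hC) (fun _ => le_rfl) i

end Kleene

section Expansion

variable {n : ℕ} (A B : Matrix (Fin n) (Fin n) (WithBot ℝ))

lemma prodAB_replicate_zero (k : ℕ) : prodAB A B (List.replicate k 0) = tpow A k := by
  induction k with
  | zero => rfl
  | succ k ih =>
    rw [List.replicate_succ, prodAB, ih, show tpow B 0 = tId from rfl, tmul_tId]
    rfl

lemma prodAB_const_add (c : WithBot ℝ) (l : List ℕ) :
    prodAB (fun a b => c + A a b) B l = fun a b => l.length • c + prodAB A B l a b := by
  induction l with
  | nil => simp [prodAB]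
  | cons e l ih =>
    simp only [prodAB]
    rw [ih]
    erw [const_add_tmul, const_add_tmul, tmul_const_add]
    simp only [List.length_cons, succ_nsmul', add_assoc]
    rfl

lemma exists_prodAB_tmul_tpow {l : List ℕ} (hl : l ≠ []) (e : ℕ) :
    ∃ l' : List ℕ, l'.length = l.length ∧ l'.sum = l.sum + e ∧
      tmul (prodAB A B l) (tpow B e) = prodAB A B l' := by
  induction l with
  | nil => contradiction
  | cons j t ih =>
    rcases eq_or_ne t [] with rfl | ht
    · refine ⟨[j + e], rfl, by simp, ?_⟩
      simp only [prodAB, tmul_tId, tmul_assoc, tpow_add]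
    · obtain ⟨t', hlen, hsum, heq⟩ := ih ht
      refine ⟨j :: t', by simp [hlen], by simp [hsum, add_assoc], ?_⟩
      rw [prodAB, prodAB, tmul_assoc, heq]

lemma exists_tpow_sup_le (m : ℕ) (i j : Fin n) :
    ∃ (e : ℕ) (l : List ℕ), e + l.length + l.sum = m ∧
      tpow (fun a b => A a b ⊔ B a b) m i j ≤ tmul (tpow B e) (prodAB A B l) i j := by
  induction m generalizing i with
  | zero => exact ⟨0, [], rfl, by simp [tpow, prodAB, tId_tmul]⟩
  | succ m ih =>
    set C : Matrix (Fin n) (Fin n) (WithBot ℝ) := fun a b => A a b ⊔ B a b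
    obtain ⟨k, -, hk⟩ := Finset.exists_mem_eq_sup Finset.univ ⟨i, Finset.mem_univ i⟩
      fun k => C i k + tpow C m k j
    obtain ⟨e, l, hsum, hle⟩ := ih k
    change tmul C (tpow C m) i j = _ at hk
    rw [tpow, hk]
    rcases le_total (A i k) (B i k) with hAB | hBA
    · refine ⟨e + 1, l, by omega, ?_⟩
      calc C i k + tpow C m k j ≤ B i k + tmul (tpow B e) (prodAB A B l) k j := by
            gcongr; exact max_le hAB le_rfl
        _ ≤ tmul B (tmul (tpow B e) (prodAB A B l)) i j := le_tmul _ _ _ _ _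
        _ = _ := by rw [tpow, tmul_assoc]
    · refine ⟨0, e :: l, by simp; omega, ?_⟩
      calc C i k + tpow C m k j ≤ A i k + tmul (tpow B e) (prodAB A B l) k j := by
            gcongr; exact max_le le_rfl hBA
        _ ≤ tmul A (tmul (tpow B e) (prodAB A B l)) i j := le_tmul _ _ _ _ _
        _ = _ := by rw [tpow, tId_tmul, prodAB, tmul_assoc]

end Expansion

section Optimum

variable {n : ℕ} (A B : Matrix (Fin n) (Fin n) (WithBot ℝ))

/-- The second summand of `θ`, spelled as in `stmt_13` so that the two agree by `rfl`. -/
def mixedRad : WithBot ℝ :=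
  (Finset.Icc 1 (n - 1)).sup fun k =>
    ((Finset.univ : Finset (Fin k → Fin (n + 1))).filter
        fun i => 1 ≤ (∑ j, (i j : ℕ)) ∧ (∑ j, (i j : ℕ)) ≤ n - k).sup
      fun i => trt (ttr (prodAB A B (List.ofFn fun j : Fin k => (i j : ℕ)))) k

lemma trt_ttr_prodAB_le {l : List ℕ} (hl : 0 < l.length) (hln : l.length + l.sum ≤ n) :
    trt (ttr (prodAB A B l)) l.length ≤ specRad A ⊔ mixedRad A B := by
  rcases Nat.eq_zero_or_pos l.sum with h0 | hpos
  · have hl0 : l = List.replicate l.length 0 :=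
      List.eq_replicate_of_mem fun a ha => List.sum_eq_zero_iff.1 h0 a ha
    rw [hl0, prodAB_replicate_zero, List.length_replicate]
    exact le_sup_of_le_left <| Finset.le_sup (f := fun m => trt (ttr (tpow A m)) m)
      (Finset.mem_Icc.2 ⟨hl, by omega⟩)
  · let i : Fin l.length → Fin (n + 1) := fun j =>
      ⟨l.get j, Nat.lt_succ_of_le ((List.le_sum_of_mem (List.get_mem l j)).trans (by omega))⟩
    have hi : List.ofFn (fun j => (i j : ℕ)) = l := List.ofFn_get l
    have hsum : ∑ j, (i j : ℕ) = l.sum := by rw [← List.sum_ofFn, hi]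
    refine le_sup_of_le_right <| Finset.le_sup_of_le (Finset.mem_Icc.2 ⟨hl, by omega⟩) <|
      Finset.le_sup_of_le (b := i) (Finset.mem_filter.2 ⟨Finset.mem_univ i, by omega⟩) ?_
    rw [hi]

theorem TrOp_tinv_add_sup_le {θ : WithBot ℝ} (hB : TrOp B ≤ 0) (hθ0 : θ ≠ ⊥)
    (hθ : specRad A ⊔ mixedRad A B ≤ θ) : TrOp (fun a b => (tinv θ + A a b) ⊔ B a b) ≤ 0 := by
  refine Finset.sup_le fun m hm => Finset.sup_le fun i _ => ?_
  obtain ⟨hm1, hmn⟩ := Finset.mem_Icc.1 hm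
  set D : Matrix (Fin n) (Fin n) (WithBot ℝ) := fun a b => tinv θ + A a b with hD
  obtain ⟨e, l, hsum, hle⟩ := exists_tpow_sup_le D B m i i
  refine hle.trans ((le_ttr _ i).trans ?_)
  rcases eq_or_ne l [] with rfl | hl
  · obtain rfl : e = m := by simpa using hsum
    simp only [prodAB, tmul_tId]
    exact (Finset.le_sup (f := fun m => ttr (tpow B m)) hm).trans hB
  · -- cyclicity of the trace moves the leading `B^e` into the last exponent of the product
    obtain ⟨l', hlen, hsum', heq⟩ := exists_prodAB_tmul_tpow D B hl e
    have hl' : 0 < l'.length := hlen ▸ List.length_pos_of_ne_nil hl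
    rw [ttr_tmul_comm, heq, hD, prodAB_const_add, ttr_const_add]
    exact nsmul_tinv_add_nonpos hθ0
      ((trt_le_iff hl').1 ((trt_ttr_prodAB_le A B hl' (by omega)).trans hθ))

theorem specRad_sup_mixedRad_le_cdot {x : Fin n → WithBot ℝ} (hx : Reg x)
    (hB : ∀ i, mulVec B x i ≤ x i) : specRad A ⊔ mixedRad A B ≤ cdot x (mulVec A x) := by
  have hA : ∀ i, mulVec A x i ≤ cdot x (mulVec A x) + x i := (cdot_le_iff hx _ _).1 le_rfl
  refine sup_le (Finset.sup_le fun m hm => ?_)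
    (Finset.sup_le fun k hk => Finset.sup_le fun i _ => ?_)
  · exact (trt_le_iff (Finset.mem_Icc.1 hm).1).2 (ttr_le_of_mulVec_le hx (mulVec_tpow_le hA m))
  · rw [trt_le_iff (Finset.mem_Icc.1 hk).1]
    simpa using ttr_le_of_mulVec_le hx (mulVec_prodAB_le hA hB (List.ofFn fun j => (i j : ℕ)))

lemma cdot_mulVec_le_iff {x : Fin n → WithBot ℝ} (hx : Reg x) {θ : WithBot ℝ} (hθ : θ ≠ ⊥) :
    cdot x (mulVec A x) ≤ θ ↔ ∀ i, mulVec (fun a b => tinv θ + A a b) x i ≤ x i := by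
  simp only [cdot_le_iff hx, const_add_mulVec, tinv_add_le_iff hθ, add_comm θ]

end Optimum

end MaxPlus

/-- minimization of `x⁻ A x` subject to `B x ⊕ g ≤ x`. -/
theorem stmt_13 {n : ℕ} (A B : Matrix (Fin n) (Fin n) (WithBot ℝ))
    (hlam : ⊥ < specRad A) (hB : TrOp B ≤ 0)
    (g : Fin n → WithBot ℝ)
    (θ : WithBot ℝ)
    (hθ : θ = specRad A ⊔ (Finset.Icc 1 (n - 1)).sup fun k =>
      ((Finset.univ : Finset (Fin k → Fin (n + 1))).filter
          fun i => 1 ≤ (∑ j, (i j : ℕ)) ∧ (∑ j, (i j : ℕ)) ≤ n - k).sup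
        fun i => trt (ttr (prodAB A B (List.ofFn fun j : Fin k => (i j : ℕ)))) k) :
    IsLeast {v | ∃ x : Fin n → WithBot ℝ, Reg x ∧ (∀ i, mulVec B x i ⊔ g i ≤ x i) ∧
        cdot x (mulVec A x) = v} θ ∧
      ∀ x : Fin n → WithBot ℝ, Reg x → (∀ i, mulVec B x i ⊔ g i ≤ x i) →
        (cdot x (mulVec A x) = θ ↔
          ∃ u : Fin n → WithBot ℝ,
            x = mulVec (kstar fun a b => (tinv θ + A a b) ⊔ B a b) u ∧
            ∀ j, g j ≤ u j) := by
  replace hθ : θ = specRad A ⊔ mixedRad A B := hθ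
  have hθ0 : θ ≠ ⊥ := (hlam.trans_le (hθ ▸ le_sup_left)).ne'
  set C : Matrix (Fin n) (Fin n) (WithBot ℝ) := fun a b => (tinv θ + A a b) ⊔ B a b
  have hC : TrOp C ≤ 0 := TrOp_tinv_add_sup_le A B hB hθ0 hθ.ge
  have hfeas_iff : ∀ x : Fin n → WithBot ℝ, (∀ i, mulVec B x i ⊔ g i ≤ x i) ↔
      (∀ i, mulVec B x i ≤ x i) ∧ ∀ i, g i ≤ x i := by
    simp only [sup_le_iff, forall_and, implies_true]
  have hopt : ∀ x, Reg x → (∀ i, mulVec B x i ⊔ g i ≤ x i) →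
      (cdot x (mulVec A x) = θ ↔ ∃ u, x = mulVec (kstar C) u ∧ ∀ j, g j ≤ u j) := by
    intro x hx hfeas
    obtain ⟨hBx, hgx⟩ := (hfeas_iff x).1 hfeas
    have hlow : θ ≤ cdot x (mulVec A x) := hθ ▸ specRad_sup_mixedRad_le_cdot A B hx hBx
    rw [← exists_eq_mulVec_kstar_iff C hC, le_antisymm_iff, and_iff_left hlow,
      cdot_mulVec_le_iff A hx hθ0]
    simp only [hgx, implies_true, and_true]
    exact forall_congr' fun i =>
      ((mulVec_sup_le_iff (fun a b => tinv θ + A a b) B x i _).trans (and_iff_left (hBx i))).symm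
  set x₀ := mulVec (kstar C) fun j => g j ⊔ 0
  have hx₀ : (∀ i, mulVec C x₀ i ≤ x₀ i) ∧ ∀ i, g i ⊔ 0 ≤ x₀ i :=
    (exists_eq_mulVec_kstar_iff C hC x₀ _).2 ⟨_, rfl, fun _ => le_rfl⟩
  have hreg₀ : Reg x₀ := fun i =>
    ne_bot_of_le_ne_bot WithBot.coe_ne_bot (le_sup_right.trans (hx₀.2 i))
  have hfeas₀ : ∀ i, mulVec B x₀ i ⊔ g i ≤ x₀ i := fun i =>
    sup_le ((mulVec_sup_le_iff _ _ _ _ _).1 (hx₀.1 i)).2 (le_sup_left.trans (hx₀.2 i))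
  refine ⟨⟨⟨x₀, hreg₀, hfeas₀, (hopt x₀ hreg₀ hfeas₀).2 ⟨_, rfl, fun _ => le_sup_left⟩⟩, ?_⟩, hopt⟩
  rintro v ⟨x, hx, hfeas, rfl⟩
  exact hθ ▸ specRad_sup_mixedRad_le_cdot A B hx ((hfeas_iff x).1 hfeas).1
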